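/- Let G be a finite group and let x, y ∈ G be elements whose orders are powers of the same prime p, with o(x) ≤ o(y). Then N[x] ⊇ N[y] in the power graph of G if and only if x is a power of y. -/

import Mathlib

/-- The power graph of a group: distinct `x, y` are adjacent iff one is a
positive power of the other. -/
def powerGraph (G : Type*) [Group G] : SimpleGraph G :=
  SimpleGraph.fromRel (fun x y => ∃ m : ℕ, 0 < m ∧ x = y ^ m)

/-- The closed neighbourhood of a vertex in the power graph. -/
def closedNbhd {G : Type*} [Group G] (x : G) : Set G :=
  insert x ((powerGraph G).neighborSet x)

/-!
In a finite group, `z ∈ N[w]` exactly when one of the cyclic subgroups `⟨z⟩`, `⟨w⟩` contains the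
other. If `N[y] ⊆ N[x]`, then `y ∈ N[x]`; and `⟨y⟩ ≤ ⟨x⟩` together with `o(x) ≤ o(y)` forces
`⟨y⟩ = ⟨x⟩`. Conversely, if `x ∈ ⟨y⟩`, a neighbour `z` of `y` either contains `⟨y⟩ ⊇ ⟨x⟩`, or lies in
the cyclic `p`-group `⟨y⟩`, whose subgroups form a chain.
-/

open Subgroup

theorem Nat.dvd_or_dvd_of_dvd_prime_pow {p b d e : ℕ} (hp : p.Prime) (hd : d ∣ p ^ b)
    (he : e ∣ p ^ b) : d ∣ e ∨ e ∣ d := by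
  obtain ⟨i, -, rfl⟩ := (Nat.dvd_prime_pow hp).1 hd
  obtain ⟨j, -, rfl⟩ := (Nat.dvd_prime_pow hp).1 he
  exact (le_total i j).imp (pow_dvd_pow p) (pow_dvd_pow p)

section Group

variable {G : Type*} [Group G]

theorem pow_gcd_orderOf_mem_zpowers_pow (y : G) (k : ℕ) :
    y ^ k.gcd (orderOf y) ∈ zpowers (y ^ k) := by
  refine ⟨k.gcdA (orderOf y), ?_⟩
  rw [← zpow_natCast y (k.gcd _), Nat.gcd_eq_gcd_ab, zpow_add, zpow_mul, zpow_mul,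
    zpow_natCast, zpow_natCast, pow_orderOf_eq_one, one_zpow, mul_one]

theorem pow_mem_zpowers_pow_of_gcd_dvd {y : G} {k m : ℕ} (h : k.gcd (orderOf y) ∣ m) :
    y ^ m ∈ zpowers (y ^ k) := by
  obtain ⟨c, rfl⟩ := h
  rw [pow_mul]
  exact pow_mem (pow_gcd_orderOf_mem_zpowers_pow y k) c

theorem mem_zpowers_or_mem_zpowers_of_orderOf_eq_prime_pow {p b : ℕ} (hp : p.Prime) {y z x : G}
    (hy : orderOf y = p ^ b) (hz : z ∈ zpowers y) (hx : x ∈ zpowers y) :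
    z ∈ zpowers x ∨ x ∈ zpowers z := by
  have hfin : IsOfFinOrder y := orderOf_pos_iff.1 (hy ▸ pow_pos hp.pos b)
  obtain ⟨k, rfl⟩ := hfin.mem_powers_iff_mem_zpowers.2 hz
  obtain ⟨m, rfl⟩ := hfin.mem_powers_iff_mem_zpowers.2 hx
  have hdvd (n : ℕ) : n.gcd (orderOf y) ∣ p ^ b := hy ▸ Nat.gcd_dvd_right n _
  rcases Nat.dvd_or_dvd_of_dvd_prime_pow hp (hdvd m) (hdvd k) with h | h
  · exact .inl (pow_mem_zpowers_pow_of_gcd_dvd (h.trans (Nat.gcd_dvd_left k _)))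
  · exact .inr (pow_mem_zpowers_pow_of_gcd_dvd (h.trans (Nat.gcd_dvd_left m _)))

theorem zpowers_eq_zpowers_of_mem_of_orderOf_le {x y : G} (hx : IsOfFinOrder x)
    (hyx : y ∈ zpowers x) (hle : orderOf x ≤ orderOf y) : zpowers y = zpowers x :=
  have := hx.finite_zpowers.to_subtype
  eq_of_le_of_card_ge (zpowers_le_of_mem hyx) (by simpa only [Nat.card_zpowers])

variable [Finite G]

theorem exists_pos_pow_eq_iff_mem_zpowers {x y : G} :
    (∃ m : ℕ, 0 < m ∧ x = y ^ m) ↔ x ∈ zpowers y := by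
  refine ⟨fun ⟨m, _, hm⟩ ↦ hm ▸ npow_mem_zpowers y m, fun h ↦ ?_⟩
  obtain ⟨n, rfl⟩ := mem_powers_iff_mem_zpowers.2 h
  exact ⟨n + orderOf y, by have := orderOf_pos y; omega,
    by rw [pow_add, pow_orderOf_eq_one, mul_one]⟩

theorem mem_closedNbhd_iff {z w : G} : z ∈ closedNbhd w ↔ z ∈ zpowers w ∨ w ∈ zpowers z := by
  simp only [closedNbhd, Set.mem_insert_iff, SimpleGraph.mem_neighborSet, powerGraph,
    SimpleGraph.fromRel_adj, exists_pos_pow_eq_iff_mem_zpowers]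
  constructor
  · rintro (rfl | ⟨-, h⟩)
    · exact .inl (mem_zpowers z)
    · exact h.symm
  · intro h
    by_cases hzw : z = w
    · exact .inl hzw
    · exact .inr ⟨Ne.symm hzw, h.symm⟩

end Group

theorem closedNbhd_superset_iff_power_general {G : Type*} [Group G] [Finite G]
    (p : ℕ) (hp : p.Prime) (x y : G)
    (hy : ∃ b : ℕ, orderOf y = p ^ b)
    (hle : orderOf x ≤ orderOf y) :
    closedNbhd y ⊆ closedNbhd x ↔ ∃ m : ℕ, 0 < m ∧ x = y ^ m := by
  obtain ⟨b, hb⟩ := hy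
  rw [exists_pos_pow_eq_iff_mem_zpowers]
  constructor
  · intro hsub
    rcases mem_closedNbhd_iff.1 (hsub (Set.mem_insert y _)) with hyx | hxy
    · rw [zpowers_eq_zpowers_of_mem_of_orderOf_le (isOfFinOrder_of_finite x) hyx hle]
      exact mem_zpowers x
    · exact hxy
  · intro hxy z hz
    rw [mem_closedNbhd_iff] at hz ⊢
    rcases hz with hzy | hyz
    · exact mem_zpowers_or_mem_zpowers_of_orderOf_eq_prime_pow hp hb hzy hxy
    · exact .inr (zpowers_le_of_mem hyz hxy)

theorem closedNbhd_superset_iff_power {G : Type*} [Group G] [Finite G]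
    (p : ℕ) (hp : p.Prime) (x y : G)
    (hx : ∃ a : ℕ, orderOf x = p ^ a) (hy : ∃ b : ℕ, orderOf y = p ^ b)
    (hle : orderOf x ≤ orderOf y) :
    closedNbhd y ⊆ closedNbhd x ↔ ∃ m : ℕ, 0 < m ∧ x = y ^ m :=
  closedNbhd_superset_iff_power_general p hp x y hy hle
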